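/- There exist constants c, C > 0 such that for all ξ with 0 < ξ ≤ 1, −C·ξ ≤ Λ''(ξ) ≤ −c·ξ, where Λ(ξ) = ξ·√(tanh ξ / ξ). -/

import Mathlib

/-!
For `ξ > 0`, `Λ = √g` with `g ξ = ξ tanh ξ`, so `Λ'' = (2 g g'' - g'²) / (4 (√g)³)`. With `t = tanh ξ`
and `s = 1 - t² = sech² ξ`, the numerator is `-lamNum ξ = -((t - ξ s)² + 4 ξ² t² s)`.
The elementary bounds `ξ / cosh ξ ≤ t ≤ ξ` and `ξ s ≤ t` make `lamNum ξ` comparable to `ξ⁴` and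
`√g` comparable to `ξ`, with constants depending only on `cosh ξ`, which is at most `cosh 1`.
-/

/-- The Whitham dispersion relation, `Λ ξ = ξ * √(tanh ξ / ξ)`. -/
noncomputable def Lam (ξ : ℝ) : ℝ := ξ * Real.sqrt (Real.tanh ξ / ξ)

open Real Filter Topology

namespace Real

theorem one_sub_tanh_sq (x : ℝ) : 1 - tanh x ^ 2 = (cosh x ^ 2)⁻¹ := by
  have hc := (cosh_pos x).ne'
  rw [tanh_eq_sinh_div_cosh, div_pow, sinh_sq]
  field_simp
  ring

theorem hasDerivAt_tanh (x : ℝ) : HasDerivAt tanh (1 - tanh x ^ 2) x := by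
  rw [one_sub_tanh_sq, show tanh = sinh / cosh from funext tanh_eq_sinh_div_cosh]
  refine ((hasDerivAt_sinh x).div (hasDerivAt_cosh x) (cosh_pos x).ne').congr_deriv ?_
  rw [← one_div, ← cosh_sq_sub_sinh_sq x]
  ring

theorem tanh_le_self {x : ℝ} (hx : 0 ≤ x) : tanh x ≤ x := by
  have hderiv (y : ℝ) : HasDerivAt (fun y ↦ y - tanh y) (tanh y ^ 2) y :=
    ((hasDerivAt_id' y).sub (hasDerivAt_tanh y)).congr_deriv (by ring)
  have hmono : Monotone fun y ↦ y - tanh y :=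
    monotone_of_deriv_nonneg (fun y ↦ (hderiv y).differentiableAt)
      fun y ↦ (hderiv y).deriv ▸ sq_nonneg _
  simpa using hmono hx

theorem div_cosh_le_tanh {x : ℝ} (hx : 0 ≤ x) : x / cosh x ≤ tanh x := by
  rw [tanh_eq_sinh_div_cosh]
  exact div_le_div_of_nonneg_right (self_le_sinh_iff.2 hx) (cosh_pos x).le

theorem tanh_pos {x : ℝ} (hx : 0 < x) : 0 < tanh x :=
  (div_pos hx (cosh_pos x)).trans_le (div_cosh_le_tanh hx.le)

theorem mul_one_sub_tanh_sq_le_tanh {x : ℝ} (hx : 0 ≤ x) : x * (1 - tanh x ^ 2) ≤ tanh x := by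
  refine le_trans ?_ (div_cosh_le_tanh hx)
  rw [one_sub_tanh_sq, ← div_eq_mul_inv]
  exact div_le_div_of_nonneg_left hx (cosh_pos x) (by nlinarith [one_le_cosh x])

end Real

theorem hasDerivAt_deriv_sqrt {g g' : ℝ → ℝ} {g'' x : ℝ}
    (hg : ∀ᶠ y in 𝓝 x, HasDerivAt g (g' y) y) (hg' : HasDerivAt g' g'' x) (hx : 0 < g x) :
    HasDerivAt (deriv fun y ↦ √(g y)) ((2 * g x * g'' - g' x ^ 2) / (4 * √(g x) ^ 3)) x := by
  have hpos : ∀ᶠ y in 𝓝 x, 0 < g y := hg.self_of_nhds.continuousAt.eventually (lt_mem_nhds hx)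
  have hderiv : deriv (fun y ↦ √(g y)) =ᶠ[𝓝 x] fun y ↦ g' y / (2 * √(g y)) := by
    filter_upwards [hg, hpos] with y hy hy0
    exact (hy.sqrt hy0.ne').deriv
  have hs : 0 < √(g x) := sqrt_pos.2 hx
  refine ((hg'.div ((hg.self_of_nhds.sqrt hx.ne').const_mul 2) (by positivity)).congr_of_eventuallyEq
    hderiv).congr_deriv ?_
  field_simp
  rw [sq_sqrt hx.le]
  ring

noncomputable def lamNum (x : ℝ) : ℝ :=
  (tanh x - x * (1 - tanh x ^ 2)) ^ 2 + 4 * x ^ 2 * tanh x ^ 2 * (1 - tanh x ^ 2)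

theorem Lam_eq_sqrt_mul_tanh {x : ℝ} (hx : 0 < x) : Lam x = √(x * tanh x) := by
  rw [Lam, ← sqrt_sq hx.le, ← sqrt_mul (sq_nonneg x), sqrt_sq hx.le]
  congr 1
  field_simp

theorem hasDerivAt_mul_tanh (x : ℝ) :
    HasDerivAt (fun y ↦ y * tanh y) (tanh x + x * (1 - tanh x ^ 2)) x :=
  ((hasDerivAt_id' x).mul (hasDerivAt_tanh x)).congr_deriv (by rw [one_mul])

theorem deriv_deriv_Lam {x : ℝ} (hx : 0 < x) :
    deriv (deriv Lam) x = -lamNum x / (4 * √(x * tanh x) ^ 3) := by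
  have hLam : Lam =ᶠ[𝓝 x] fun y ↦ √(y * tanh y) := by
    filter_upwards [Ioi_mem_nhds hx] with y hy
    exact Lam_eq_sqrt_mul_tanh hy
  have hg'' : HasDerivAt (fun y ↦ tanh y + y * (1 - tanh y ^ 2))
      (2 * (1 - tanh x ^ 2) * (1 - x * tanh x)) x := by
    refine ((hasDerivAt_tanh x).add ((hasDerivAt_id' x).mul
      (((hasDerivAt_tanh x).pow 2).const_sub 1))).congr_deriv ?_
    simp only [Pi.pow_apply]
    ring
  rw [hLam.deriv.deriv_eq, (hasDerivAt_deriv_sqrt (.of_forall hasDerivAt_mul_tanh) hg''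
    (mul_pos hx (tanh_pos hx))).deriv, lamNum]
  ring

theorem lamNum_le {x : ℝ} (hx : 0 ≤ x) : lamNum x ≤ 5 * x ^ 4 := by
  have ht0 : 0 ≤ tanh x := (div_nonneg hx (cosh_pos x).le).trans (div_cosh_le_tanh hx)
  have htx : tanh x ≤ x := tanh_le_self hx
  have ht1 : tanh x < 1 := tanh_lt_one x
  have hs0 : 0 ≤ 1 - tanh x ^ 2 := by rw [one_sub_tanh_sq]; positivity
  have hdiff : 0 ≤ tanh x - x * (1 - tanh x ^ 2) := sub_nonneg.2 (mul_one_sub_tanh_sq_le_tanh hx)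
  have hdiff' : tanh x - x * (1 - tanh x ^ 2) ≤ x ^ 2 := by nlinarith
  have hsq : (tanh x - x * (1 - tanh x ^ 2)) ^ 2 ≤ x ^ 4 := by
    simpa [← pow_mul] using pow_le_pow_left₀ hdiff hdiff' 2
  have hprod : x ^ 2 * tanh x ^ 2 * (1 - tanh x ^ 2) ≤ x ^ 4 := by
    have : tanh x ^ 2 ≤ x ^ 2 := pow_le_pow_left₀ ht0 htx 2
    nlinarith [sq_nonneg x, sq_nonneg (tanh x)]
  rw [lamNum]
  linarith

theorem le_lamNum {x : ℝ} (hx : 0 ≤ x) : 4 * x ^ 4 / cosh x ^ 4 ≤ lamNum x := by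
  have ht : (x / cosh x) ^ 2 ≤ tanh x ^ 2 :=
    pow_le_pow_left₀ (div_nonneg hx (cosh_pos x).le) (div_cosh_le_tanh hx) 2
  calc 4 * x ^ 4 / cosh x ^ 4 = 4 * x ^ 2 * (x / cosh x) ^ 2 * (cosh x ^ 2)⁻¹ := by ring
    _ ≤ 4 * x ^ 2 * tanh x ^ 2 * (1 - tanh x ^ 2) := by rw [one_sub_tanh_sq]; gcongr
    _ ≤ lamNum x := le_add_of_nonneg_left (sq_nonneg _)

theorem div_cosh_le_sqrt_mul_tanh {x : ℝ} (hx : 0 ≤ x) : x / cosh x ≤ √(x * tanh x) := by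
  have hxc : x / cosh x ≤ x := div_le_self hx (one_le_cosh x)
  refine le_sqrt_of_sq_le ?_
  calc (x / cosh x) ^ 2 = x / cosh x * (x / cosh x) := sq _
    _ ≤ x * tanh x := mul_le_mul hxc (div_cosh_le_tanh hx) (div_nonneg hx (cosh_pos x).le) hx

theorem sqrt_mul_tanh_le {x : ℝ} (hx : 0 ≤ x) : √(x * tanh x) ≤ x :=
  sqrt_le_iff.2 ⟨hx, by nlinarith [tanh_le_self hx]⟩

/-- For `0 < ξ ≤ 1`, `Λ''(ξ)` is comparable to `-ξ`. -/
theorem deriv2_Lam_low_freq :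
    ∃ c > (0 : ℝ), ∃ C > (0 : ℝ), ∀ ξ : ℝ, 0 < ξ → ξ ≤ 1 →
      -C * ξ ≤ deriv (deriv Lam) ξ ∧ deriv (deriv Lam) ξ ≤ -c * ξ := by
  set K := cosh 1
  have hK : 0 < K := cosh_pos 1
  refine ⟨(K ^ 4)⁻¹, by positivity, 5 * K ^ 3 / 4, by positivity, fun x hx hx1 ↦ ?_⟩
  have hcosh : cosh x ≤ K := cosh_le_cosh.2 (by rwa [abs_of_pos hx, abs_one])
  have hN : 4 * x ^ 4 / K ^ 4 ≤ lamNum x :=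
    (div_le_div_of_nonneg_left (by positivity) (by positivity)
      (pow_le_pow_left₀ (cosh_pos x).le hcosh 4)).trans (le_lamNum hx.le)
  have hN' : lamNum x ≤ 5 * x ^ 4 := lamNum_le hx.le
  rw [deriv_deriv_Lam hx]
  set r := √(x * tanh x)
  have hr : x ≤ K * r := by
    rw [← div_le_iff₀' hK]
    exact (div_le_div_of_nonneg_left hx.le (cosh_pos x) hcosh).trans
      (div_cosh_le_sqrt_mul_tanh hx.le)
  have hr' : r ≤ x := sqrt_mul_tanh_le hx.le
  have hr0 : 0 < r := sqrt_pos.2 (mul_pos hx (tanh_pos hx))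
  constructor
  · rw [le_div_iff₀ (by positivity)]
    have : x ^ 3 ≤ (K * r) ^ 3 := pow_le_pow_left₀ hx.le hr 3
    nlinarith
  · rw [div_le_iff₀ (by positivity)]
    have : (K ^ 4)⁻¹ * x * (4 * r ^ 3) ≤ 4 * x ^ 4 / K ^ 4 :=
      calc (K ^ 4)⁻¹ * x * (4 * r ^ 3) ≤ (K ^ 4)⁻¹ * x * (4 * x ^ 3) := by gcongr
        _ = 4 * x ^ 4 / K ^ 4 := by ring
    linarith
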